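/- arXiv:2102.01725 — 3 statements merged into one kernel-verified Lean document; each statement's English description precedes it below -/
import Mathlib

section
/- In the weighted Hardy space H²_ω, the n-th optimal polynomial approximant of 1/(1−z) is q_n(z) = Σ_{k=0}^n (1 − (Σ_{j=0}^k 1/ω_j)/(Σ_{j=0}^{n+1} 1/ω_j)) z^k. -/
open scoped BigOperators
open Polynomial Filter

noncomputable section

/-- Coefficient sequence of the product p·f, where f is an analytic function on the disk
given by its Taylor coefficient sequence. -/
def polyMulSeq (p : Polynomial ℂ) (f : ℕ → ℂ) : ℕ → ℂ :=
  fun n => ∑ j ∈ Finset.range (n + 1), p.coeff j * f (n - j)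

/-- The constant function 1 as a Taylor coefficient sequence. -/
def oneSeq : ℕ → ℂ := fun n => if n = 0 then 1 else 0

/-- Membership in the weighted Hardy space H²_ω. -/
def MemHw (ω : ℕ → ℝ) (f : ℕ → ℂ) : Prop :=
  Summable (fun k => ‖f k‖ ^ 2 * ω k)

/-- Squared weighted norm ‖f‖²_ω. -/
def wNormSq (ω : ℕ → ℝ) (f : ℕ → ℂ) : ℝ := ∑' k, ‖f k‖ ^ 2 * ω k

/-- Weighted inner product ⟨f,g⟩_ω. -/
def wInner (ω : ℕ → ℝ) (f g : ℕ → ℂ) : ℂ :=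
  ∑' k, f k * (starRingEnd ℂ) (g k) * (ω k : ℂ)

/-- `q` is the n-th optimal polynomial approximant of 1/f in H²_ω. -/
def IsOPA (ω : ℕ → ℝ) (f : ℕ → ℂ) (n : ℕ) (q : Polynomial ℂ) : Prop :=
  q.natDegree ≤ n ∧
  ∀ p : Polynomial ℂ, p.natDegree ≤ n →
    wNormSq ω (polyMulSeq q f - oneSeq) ≤ wNormSq ω (polyMulSeq p f - oneSeq)

/-! For `deg p ≤ n` the residual `g = p (1 - z) - 1` is a polynomial of degree `≤ n + 1` with
`g(1) = -1`, i.e. its coefficients sum to `-1`. Cauchy–Schwarz gives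
`1 = |∑ gₘ|² ≤ (∑ |gₘ|² ωₘ) (∑ 1/ωₘ)`, so `‖g‖²_ω ≥ 1 / ∑_{m ≤ n+1} 1/ωₘ`, with equality when
`gₘ` is proportional to `1/ωₘ`. The stated `qₙ` is exactly the polynomial whose residual has
coefficients `gₘ = -(1/ωₘ) / ∑_{j ≤ n+1} 1/ωⱼ`. -/

open Finset

section OneSubX

variable {R : Type*} [Ring R]

lemma coeff_one_sub_X (k : ℕ) :
    ((1 : R[X]) - X).coeff k = if k = 0 then 1 else if k = 1 then -1 else 0 := by
  rcases k with _ | _ | k <;> simp [coeff_one, coeff_X]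

lemma coeff_mul_one_sub_X_succ (p : R[X]) (m : ℕ) :
    (p * (1 - X)).coeff (m + 1) = p.coeff (m + 1) - p.coeff m := by
  rw [mul_sub, mul_one, coeff_sub, coeff_mul_X]

lemma natDegree_mul_one_sub_X_sub_one_lt {p : R[X]} {n : ℕ} (hp : p.natDegree ≤ n) :
    (p * (1 - X) - 1).natDegree < n + 2 := by
  refine (natDegree_sub_le _ _).trans_lt ?_
  have : (p * (1 - X)).natDegree ≤ n + 1 :=
    natDegree_mul_le_of_le hp ((natDegree_sub_le _ _).trans (by simp [natDegree_X_le]))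
  simp only [natDegree_one]
  omega

end OneSubX

lemma polyMulSeq_coeff (p r : ℂ[X]) : polyMulSeq p r.coeff = (p * r).coeff := by
  ext m
  rw [polyMulSeq, coeff_mul, Nat.sum_antidiagonal_eq_sum_range_succ_mk]

lemma oneSeq_eq_coeff_one : oneSeq = (1 : ℂ[X]).coeff := by
  ext m
  rw [oneSeq, coeff_one]

lemma polyMulSeq_one_sub_X_sub_oneSeq (p : ℂ[X]) :
    polyMulSeq p (fun k => if k = 0 then 1 else if k = 1 then -1 else 0) - oneSeq
      = (p * (1 - X) - 1).coeff := by
  simp_rw [← coeff_one_sub_X, polyMulSeq_coeff, oneSeq_eq_coeff_one]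
  ext m
  simp

lemma wNormSq_eq_sum_range (ω : ℕ → ℝ) {f : ℕ → ℂ} {N : ℕ} (hf : ∀ m, N ≤ m → f m = 0) :
    wNormSq ω f = ∑ m ∈ range N, ‖f m‖ ^ 2 * ω m :=
  tsum_eq_sum fun m hm => by simp [hf m (by simpa using hm)]

lemma sq_norm_sum_div_le_sum_sq_norm_mul {ι : Type*} (s : Finset ι) {ω : ι → ℝ}
    (hω : ∀ i ∈ s, 0 < ω i) (g : ι → ℂ) :
    ‖∑ i ∈ s, g i‖ ^ 2 / ∑ i ∈ s, 1 / ω i ≤ ∑ i ∈ s, ‖g i‖ ^ 2 * ω i := by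
  have hinv : ∀ i ∈ s, 0 < 1 / ω i := fun i hi => one_div_pos.mpr (hω i hi)
  calc ‖∑ i ∈ s, g i‖ ^ 2 / ∑ i ∈ s, 1 / ω i
      ≤ (∑ i ∈ s, ‖g i‖) ^ 2 / ∑ i ∈ s, 1 / ω i := by
        gcongr
        · exact sum_nonneg fun i hi => (hinv i hi).le
        · exact norm_sum_le _ _
    _ ≤ ∑ i ∈ s, ‖g i‖ ^ 2 / (1 / ω i) := sq_sum_div_le_sum_sq_div s _ hinv
    _ = ∑ i ∈ s, ‖g i‖ ^ 2 * ω i := by simp_rw [div_div_eq_mul_div, div_one]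

def invWeightSum (ω : ℕ → ℝ) (k : ℕ) : ℝ := ∑ j ∈ range k, 1 / ω j

lemma invWeightSum_zero (ω : ℕ → ℝ) : invWeightSum ω 0 = 0 := sum_range_zero _

lemma invWeightSum_succ (ω : ℕ → ℝ) (k : ℕ) :
    invWeightSum ω (k + 1) = invWeightSum ω k + 1 / ω k :=
  sum_range_succ _ _

lemma invWeightSum_pos {ω : ℕ → ℝ} (hω : ∀ k, 0 < ω k) {k : ℕ} (hk : k ≠ 0) :
    0 < invWeightSum ω k :=
  sum_pos (fun j _ => one_div_pos.mpr (hω j)) (nonempty_range_iff.mpr hk)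

lemma one_div_invWeightSum_le_wNormSq {ω : ℕ → ℝ} (hω : ∀ k, 0 < ω k) {n : ℕ} {p : ℂ[X]}
    (hp : p.natDegree ≤ n) :
    1 / invWeightSum ω (n + 2) ≤ wNormSq ω (p * (1 - X) - 1).coeff := by
  set g : ℂ[X] := p * (1 - X) - 1
  have hg : g.natDegree < n + 2 := natDegree_mul_one_sub_X_sub_one_lt hp
  have hsum : ∑ m ∈ range (n + 2), g.coeff m = -1 := by
    simpa [g] using (eval_eq_sum_range' hg 1).symm
  rw [wNormSq_eq_sum_range ω fun m hm => coeff_eq_zero_of_natDegree_lt (hg.trans_le hm)]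
  simpa [hsum, invWeightSum] using
    sq_norm_sum_div_le_sum_sq_norm_mul (range (n + 2)) (fun k _ => hω k) g.coeff

def oneSubXApproximant (ω : ℕ → ℝ) (n : ℕ) : ℂ[X] :=
  ∑ k ∈ range (n + 1),
    C ((1 - invWeightSum ω (k + 1) / invWeightSum ω (n + 2) : ℝ) : ℂ) * X ^ k

lemma natDegree_oneSubXApproximant_le (ω : ℕ → ℝ) (n : ℕ) :
    (oneSubXApproximant ω n).natDegree ≤ n :=
  natDegree_sum_le_of_forall_le _ _ fun _ hk =>
    (natDegree_C_mul_X_pow_le _ _).trans (Nat.lt_succ_iff.mp (mem_range.mp hk))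

/-- Valid up to `k = n + 1`, where both sides vanish. -/
lemma coeff_oneSubXApproximant {ω : ℕ → ℝ} (hω : ∀ k, 0 < ω k) {n k : ℕ} (hk : k ≤ n + 1) :
    (oneSubXApproximant ω n).coeff k
      = ((1 - invWeightSum ω (k + 1) / invWeightSum ω (n + 2) : ℝ) : ℂ) := by
  simp only [oneSubXApproximant, finsetSum_coeff, coeff_C_mul_X_pow, sum_ite_eq, mem_range]
  split_ifs with h
  · rfl
  · rw [show k = n + 1 by omega, div_self (invWeightSum_pos hω (by omega)).ne', sub_self,
      Complex.ofReal_zero]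

lemma coeff_residual_oneSubXApproximant {ω : ℕ → ℝ} (hω : ∀ k, 0 < ω k) {n m : ℕ}
    (hm : m < n + 2) :
    (oneSubXApproximant ω n * (1 - X) - 1).coeff m
      = ((-(1 / ω m) / invWeightSum ω (n + 2) : ℝ) : ℂ) := by
  rcases m with _ | m
  · rw [coeff_sub, mul_coeff_zero, coeff_oneSubXApproximant hω (by omega), invWeightSum_succ,
      invWeightSum_zero]
    simp only [coeff_sub, coeff_X_zero, coeff_one]
    push_cast
    ring
  · rw [coeff_sub, coeff_mul_one_sub_X_succ, coeff_oneSubXApproximant hω (by omega),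
      coeff_oneSubXApproximant hω (by omega), invWeightSum_succ _ (m + 1), coeff_one,
      if_neg m.succ_ne_zero]
    push_cast
    ring

lemma wNormSq_residual_oneSubXApproximant {ω : ℕ → ℝ} (hω : ∀ k, 0 < ω k) (n : ℕ) :
    wNormSq ω (oneSubXApproximant ω n * (1 - X) - 1).coeff = 1 / invWeightSum ω (n + 2) := by
  have hS : invWeightSum ω (n + 2) ≠ 0 := (invWeightSum_pos hω (by omega)).ne'
  have hres := natDegree_mul_one_sub_X_sub_one_lt (natDegree_oneSubXApproximant_le ω n)
  rw [wNormSq_eq_sum_range ω fun m hm => coeff_eq_zero_of_natDegree_lt (hres.trans_le hm)]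
  calc ∑ m ∈ range (n + 2), ‖(oneSubXApproximant ω n * (1 - X) - 1).coeff m‖ ^ 2 * ω m
      = ∑ m ∈ range (n + 2), 1 / ω m / invWeightSum ω (n + 2) ^ 2 := by
        refine sum_congr rfl fun m hm => ?_
        rw [coeff_residual_oneSubXApproximant hω (mem_range.mp hm), Complex.norm_real,
          Real.norm_eq_abs, sq_abs]
        field_simp [(hω m).ne']
    _ = 1 / invWeightSum ω (n + 2) := by
        rw [← sum_div, ← invWeightSum]
        field_simp

theorem stmt_4_general (ω : ℕ → ℝ) (hωpos : ∀ k, 0 < ω k) (n : ℕ) :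
    IsOPA ω (fun k => if k = 0 then 1 else if k = 1 then -1 else 0) n
      (∑ k ∈ Finset.range (n + 1),
        Polynomial.C
          ((1 - (∑ j ∈ Finset.range (k + 1), 1 / ω j) /
              (∑ j ∈ Finset.range (n + 2), 1 / ω j) : ℝ) : ℂ) * Polynomial.X ^ k) := by
  change IsOPA ω _ n (oneSubXApproximant ω n)
  refine ⟨natDegree_oneSubXApproximant_le ω n, fun p hp => ?_⟩
  rw [polyMulSeq_one_sub_X_sub_oneSeq, polyMulSeq_one_sub_X_sub_oneSeq,
    wNormSq_residual_oneSubXApproximant hωpos]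
  exact one_div_invWeightSum_le_wNormSq hωpos hp

/-- In H²_ω, the n-th opa of 1/(1-z) is
∑_{k=0}^n (1 - (∑_{j=0}^k 1/ω_j)/(∑_{j=0}^{n+1} 1/ω_j)) z^k. -/
theorem stmt_4 (ω : ℕ → ℝ) (hω0 : ω 0 = 1) (hωpos : ∀ k, 0 < ω k) (n : ℕ) :
    IsOPA ω (fun k => if k = 0 then 1 else if k = 1 then -1 else 0) n
      (∑ k ∈ Finset.range (n + 1),
        Polynomial.C
          ((1 - (∑ j ∈ Finset.range (k + 1), 1 / ω j) /
              (∑ j ∈ Finset.range (n + 2), 1 / ω j) : ℝ) : ℂ) * Polynomial.X ^ k) :=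
  stmt_4_general ω hωpos n
end
end

section
/- In H²_ω with f(z) = 1 − z, the squared optimal distance satisfies ‖q_n f − 1‖²_ω = 1/(Σ_{k=0}^{n+1} 1/ω_k), where q_n is the n-th optimal polynomial approximant of 1/f. -/
open scoped BigOperators
open Polynomial Filter

noncomputable section

/-!
The residual `r = q (1 - z) - 1` of a polynomial `q` of degree at most `n` is a polynomial of
degree at most `n + 1` with `r(1) = -1`, and every such `r` arises from some `q`, since `r + 1`
vanishes at `1`. By Cauchy–Schwarz, `1 = |∑ r_k|² ≤ (∑ |r_k|² ω_k) (∑ 1 / ω_k)`, and equality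
is attained.
-/

def oneSubXSeq : ℕ → ℂ := fun k => if k = 0 then 1 else if k = 1 then -1 else 0

lemma polyMulSeq_coeff_s5 (p g : ℂ[X]) :
    polyMulSeq p (fun k => g.coeff k) = fun n => (p * g).coeff n := by
  ext n
  rw [polyMulSeq, coeff_mul, Finset.Nat.sum_antidiagonal_eq_sum_range_succ_mk]

lemma oneSubXSeq_eq_coeff : oneSubXSeq = fun k => (1 - X : ℂ[X]).coeff k := by
  ext k
  rcases k with _ | _ | k <;> simp [oneSubXSeq, coeff_one, coeff_X]

lemma polyMulSeq_oneSubXSeq_sub_oneSeq (p : ℂ[X]) :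
    polyMulSeq p oneSubXSeq - oneSeq = fun k => (p * (1 - X) - 1).coeff k := by
  ext k
  rw [oneSubXSeq_eq_coeff, polyMulSeq_coeff_s5, Pi.sub_apply, coeff_sub, coeff_one, oneSeq]

lemma wNormSq_coeff_eq_sum (ω : ℕ → ℝ) (r : ℂ[X]) {N : ℕ} (hr : r.natDegree < N) :
    wNormSq ω (fun k => r.coeff k) = ∑ k ∈ Finset.range N, ‖r.coeff k‖ ^ 2 * ω k := by
  refine tsum_eq_sum fun k hk => ?_
  simp [coeff_eq_zero_of_natDegree_lt (hr.trans_le (by simpa using hk))]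

lemma sq_norm_sum_le_mul_sum_inv {ι E : Type*} [SeminormedAddCommGroup E] (s : Finset ι)
    (c : ι → E) (ω : ι → ℝ) (hω : ∀ k ∈ s, 0 < ω k) :
    ‖∑ k ∈ s, c k‖ ^ 2 ≤ (∑ k ∈ s, ‖c k‖ ^ 2 * ω k) * ∑ k ∈ s, 1 / ω k := by
  calc ‖∑ k ∈ s, c k‖ ^ 2 ≤ (∑ k ∈ s, ‖c k‖) ^ 2 := by gcongr; exact norm_sum_le _ _
    _ ≤ _ := Finset.sum_sq_le_sum_mul_sum_of_sq_le_mul s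
      (fun k hk => by have := hω k hk; positivity) (fun k hk => by have := hω k hk; positivity)
      (fun k hk => by field_simp [(hω k hk).ne']; rfl)

lemma exists_mul_one_sub_X_sub_one_eq {R : Type*} [CommRing R] [Nontrivial R] (r : R[X])
    (hr : r.eval 1 = -1) :
    ∃ p : R[X], p.natDegree ≤ r.natDegree - 1 ∧ p * (1 - X) - 1 = r := by
  have hroot : (r + 1).IsRoot 1 := by simp [IsRoot, hr]
  have hdvd := (mul_divByMonic_eq_iff_isRoot (p := r + 1)).2 hroot
  refine ⟨-((r + 1) /ₘ (X - C 1)), ?_, by rw [C_1] at hdvd ⊢; linear_combination hdvd⟩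
  rw [natDegree_neg, natDegree_divByMonic _ (monic_X_sub_C 1), natDegree_X_sub_C]
  have := natDegree_add_le r 1
  rw [natDegree_one, max_eq_left (Nat.zero_le _)] at this
  omega

section
variable {ω : ℕ → ℝ} (hω : ∀ k, 0 < ω k)
include hω

lemma inv_sum_inv_le_wNormSq {n : ℕ} {p : ℂ[X]} (hp : p.natDegree ≤ n) :
    1 / ∑ k ∈ Finset.range (n + 2), 1 / ω k
      ≤ wNormSq ω (polyMulSeq p oneSubXSeq - oneSeq) := by
  set r := p * (1 - X) - 1
  have hr : r.natDegree < n + 2 := by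
    have h1X : (1 - X : ℂ[X]).natDegree ≤ 1 := by compute_degree!
    have := natDegree_sub_le_of_le (natDegree_mul_le_of_le hp h1X) natDegree_one.le
    exact Nat.lt_succ_of_le (this.trans_eq (max_eq_left (Nat.zero_le _)))
  have hsum : ∑ k ∈ Finset.range (n + 2), r.coeff k = -1 := by
    simpa [r] using (eval_eq_sum_range' hr 1).symm
  have hS : 0 < ∑ k ∈ Finset.range (n + 2), 1 / ω k :=
    Finset.sum_pos (fun k _ => one_div_pos.2 (hω k)) ⟨0, by simp⟩
  rw [polyMulSeq_oneSubXSeq_sub_oneSeq, wNormSq_coeff_eq_sum ω r hr, div_le_iff₀ hS]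
  simpa [hsum] using
    sq_norm_sum_le_mul_sum_inv (Finset.range (n + 2)) r.coeff ω fun k _ => hω k

lemma exists_wNormSq_eq_inv_sum_inv (n : ℕ) :
    ∃ p : ℂ[X], p.natDegree ≤ n ∧
      wNormSq ω (polyMulSeq p oneSubXSeq - oneSeq) = 1 / ∑ k ∈ Finset.range (n + 2), 1 / ω k := by
  set S := ∑ k ∈ Finset.range (n + 2), 1 / ω k
  have hS : 0 < S := Finset.sum_pos (fun k _ => one_div_pos.2 (hω k)) ⟨0, by simp⟩
  -- the case of equality in Cauchy–Schwarz: residual coefficients proportional to `1 / ω k`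
  set c : ℕ → ℝ := fun k => -(1 / ω k) / S
  set r : ℂ[X] := ∑ k ∈ Finset.range (n + 2), monomial k (c k : ℂ)
  have hcoeff (k : ℕ) : r.coeff k = if k < n + 2 then (c k : ℂ) else 0 := by
    simp [r, coeff_monomial]
  have hr : r.natDegree < n + 2 :=
    Nat.lt_succ_of_le <| natDegree_sum_le_of_forall_le _ _ fun k hk =>
      (natDegree_monomial_le _).trans (Nat.lt_succ_iff.1 (Finset.mem_range.1 hk))
  have heval : r.eval 1 = -1 := by
    have : ∑ k ∈ Finset.range (n + 2), c k = -1 := by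
      simp only [c, ← Finset.sum_div, Finset.sum_neg_distrib, neg_div]
      exact congrArg Neg.neg (div_self hS.ne')
    simp [r, eval_finsetSum, ← Complex.ofReal_sum, this]
  obtain ⟨p, hp, hpr⟩ := exists_mul_one_sub_X_sub_one_eq r heval
  refine ⟨p, by omega, ?_⟩
  rw [polyMulSeq_oneSubXSeq_sub_oneSeq, hpr, wNormSq_coeff_eq_sum ω r hr]
  calc ∑ k ∈ Finset.range (n + 2), ‖r.coeff k‖ ^ 2 * ω k
      = ∑ k ∈ Finset.range (n + 2), 1 / ω k / S ^ 2 := by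
        refine Finset.sum_congr rfl fun k hk => ?_
        rw [hcoeff, if_pos (Finset.mem_range.1 hk), Complex.norm_real, Real.norm_eq_abs, sq_abs]
        simp only [c]
        field_simp [(hω k).ne']
    _ = S / S ^ 2 := (Finset.sum_div ..).symm
    _ = 1 / S := by field_simp

end

theorem stmt_5_general (ω : ℕ → ℝ) (hωpos : ∀ k, 0 < ω k)
    (n : ℕ) (q : Polynomial ℂ)
    (hq : IsOPA ω (fun k => if k = 0 then 1 else if k = 1 then -1 else 0) n q) :
    wNormSq ω (polyMulSeq q (fun k => if k = 0 then 1 else if k = 1 then -1 else 0) - oneSeq)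
      = 1 / (∑ k ∈ Finset.range (n + 2), 1 / ω k) := by
  obtain ⟨p, hp, hpval⟩ := exists_wNormSq_eq_inv_sum_inv hωpos n
  exact le_antisymm ((hq.2 p hp).trans hpval.le) (inv_sum_inv_le_wNormSq hωpos hq.1)

/-- In H²_ω with f = 1 - z, ‖q_n f - 1‖²_ω = 1/(∑_{k=0}^{n+1} 1/ω_k). -/
theorem stmt_5 (ω : ℕ → ℝ) (hω0 : ω 0 = 1) (hωpos : ∀ k, 0 < ω k)
    (n : ℕ) (q : Polynomial ℂ)
    (hq : IsOPA ω (fun k => if k = 0 then 1 else if k = 1 then -1 else 0) n q) :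
    wNormSq ω (polyMulSeq q (fun k => if k = 0 then 1 else if k = 1 then -1 else 0) - oneSeq)
      = 1 / (∑ k ∈ Finset.range (n + 2), 1 / ω k) :=
  stmt_5_general ω hωpos n q hq
end
end

section
/- Let H²_ω be a weighted Hardy space with non-decreasing weights ω_k. Then for every nonzero f ∈ H²_ω with f(0) ≠ 0, every n ∈ ℕ, and every zero z₁ of the n-th optimal polynomial approximant q_n of 1/f, one has |z₁| ≥ 1. -/
/-!
Write `q = (z - z₁) r` and `g = r f`. Optimality makes `q f - 1` orthogonal in `H²_ω` to every
`p f` with `deg p ≤ n`, in particular to `z g`; as `1` is orthogonal to `z g` too, this gives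
`‖z g‖² = z̄₁ ⟨g, z g⟩ ≤ |z₁| ‖g‖ ‖z g‖`. For non-decreasing weights the shift is expansive,
`‖g‖ ≤ ‖z g‖`, hence `|z₁| ≥ 1`. The ratio condition makes the shift bounded, so that all `p f`
lie in `H²_ω`; the Hilbert-space arguments are run in `ℓ²` through the isometry
`a ↦ (√ω_k a_k)_k`.
-/

open scoped BigOperators
open Polynomial Filter

noncomputable section

local notation "ℓ²" => lp (fun _ : ℕ => ℂ) 2

def shiftSeq (f : ℕ → ℂ) : ℕ → ℂ
  | 0 => 0
  | m + 1 => f m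

lemma polyMulSeq_add (p q : ℂ[X]) (f : ℕ → ℂ) :
    polyMulSeq (p + q) f = polyMulSeq p f + polyMulSeq q f := by
  funext n
  simp [polyMulSeq, add_mul, Finset.sum_add_distrib]

lemma polyMulSeq_smul (c : ℂ) (p : ℂ[X]) (f : ℕ → ℂ) :
    polyMulSeq (c • p) f = c • polyMulSeq p f := by
  funext n
  simp [polyMulSeq, Finset.mul_sum, mul_assoc]

lemma polyMulSeq_sub (p q : ℂ[X]) (f : ℕ → ℂ) :
    polyMulSeq (p - q) f = polyMulSeq p f - polyMulSeq q f := by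
  funext n
  simp [polyMulSeq, sub_mul, Finset.sum_sub_distrib]

lemma polyMulSeq_C (c : ℂ) (f : ℕ → ℂ) : polyMulSeq (C c) f = c • f := by
  funext n
  rw [polyMulSeq, Finset.sum_eq_single 0 (fun j _ hj => by simp [coeff_C, hj]) (by simp)]
  simp

lemma polyMulSeq_one (f : ℕ → ℂ) : polyMulSeq 1 f = f := by
  rw [← C_1, polyMulSeq_C, one_smul]

lemma polyMulSeq_zero (f : ℕ → ℂ) : polyMulSeq 0 f = 0 := by
  funext n
  simp [polyMulSeq]

lemma polyMulSeq_X_mul (r : ℂ[X]) (f : ℕ → ℂ) :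
    polyMulSeq (X * r) f = shiftSeq (polyMulSeq r f) := by
  funext n
  cases n with
  | zero => simp [polyMulSeq, shiftSeq]
  | succ m =>
    rw [polyMulSeq, Finset.sum_range_succ']
    simp [polyMulSeq, shiftSeq, coeff_X_mul]

lemma polyMulSeq_eq_coeff_mul (p : ℂ[X]) (f : ℕ → ℂ) (n : ℕ) :
    polyMulSeq p f n = PowerSeries.coeff n ((p : PowerSeries ℂ) * PowerSeries.mk f) := by
  rw [PowerSeries.coeff_mul, Finset.Nat.sum_antidiagonal_eq_sum_range_succ_mk]
  simp [polyMulSeq, coeff_coe]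

lemma polyMulSeq_ne_zero {p : ℂ[X]} {f : ℕ → ℂ} (hp : p ≠ 0) (hf : f ≠ 0) :
    polyMulSeq p f ≠ 0 := by
  intro h
  have hmul : (p : PowerSeries ℂ) * PowerSeries.mk f = 0 := by
    ext n
    simpa [polyMulSeq_eq_coeff_mul] using congrFun h n
  rcases mul_eq_zero.mp hmul with hp' | hf'
  · exact hp (coe_eq_zero_iff.mp hp')
  · exact hf (funext fun n => by simpa using congrArg (PowerSeries.coeff n) hf')

section InnerProductSpace

variable {𝕜 E : Type*} [RCLike 𝕜] [NormedAddCommGroup E] [InnerProductSpace 𝕜 E]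

theorem inner_eq_zero_of_forall_norm_le_norm_sub_smul {u w : E}
    (h : ∀ c : 𝕜, ‖u‖ ≤ ‖u - c • w‖) : inner 𝕜 u w = 0 := by
  have hmin : ‖u - 0‖ = ⨅ v : (𝕜 ∙ w), ‖u - v‖ := by
    refine le_antisymm (le_ciInf fun v => ?_)
      (ciInf_le ⟨0, Set.forall_mem_range.2 fun _ => norm_nonneg _⟩ 0)
    obtain ⟨c, hc⟩ := Submodule.mem_span_singleton.1 v.2
    rw [sub_zero, ← hc]
    exact h c
  simpa using ((𝕜 ∙ w).norm_eq_iInf_iff_inner_eq_zero (zero_mem _)).1 hmin w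
    (Submodule.mem_span_singleton_self w)

theorem one_le_norm_of_inner_sub_smul_eq_zero {x y : E} {z : 𝕜} (hy : y ≠ 0)
    (hyx : ‖y‖ ≤ ‖x‖) (h : inner 𝕜 (x - z • y) x = 0) : 1 ≤ ‖z‖ := by
  have hx' : 0 < ‖x‖ := (norm_pos_iff.2 hy).trans_le hyx
  have hxx : inner 𝕜 x x = starRingEnd 𝕜 z * inner 𝕜 y x := by
    rwa [inner_sub_left, inner_smul_left, sub_eq_zero] at h
  have : ‖x‖ ^ 2 ≤ ‖z‖ * ‖x‖ ^ 2 :=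
    calc ‖x‖ ^ 2 = ‖inner 𝕜 x x‖ := by simp [inner_self_eq_norm_sq_to_K]
      _ = ‖z‖ * ‖inner 𝕜 y x‖ := by rw [hxx, norm_mul, RCLike.norm_conj]
      _ ≤ ‖z‖ * (‖y‖ * ‖x‖) := by gcongr; exact norm_inner_le_norm y x
      _ ≤ ‖z‖ * ‖x‖ ^ 2 := by rw [sq]; gcongr
  nlinarith [pow_pos hx' 2]

end InnerProductSpace

section HardySpace

variable {ω : ℕ → ℝ}

def sqrtWeightMul (ω : ℕ → ℝ) : (ℕ → ℂ) →ₗ[ℂ] (ℕ → ℂ) where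
  toFun a k := (√(ω k) : ℂ) * a k
  map_add' a b := _root_.funext fun k => mul_add _ (a k) (b k)
  map_smul' c a := _root_.funext fun k => mul_left_comm _ c (a k)

def hardySpace (ω : ℕ → ℝ) : Submodule ℂ (ℕ → ℂ) where
  carrier := {a | Memℓp (sqrtWeightMul ω a) 2}
  add_mem' {a b} ha hb := by
    rw [Set.mem_ofPred_eq, map_add]
    exact ha.add hb
  zero_mem' := by
    rw [Set.mem_ofPred_eq, map_zero]
    exact zero_memℓp
  smul_mem' c a ha := by
    rw [Set.mem_ofPred_eq, map_smul]
    exact ha.const_smul c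

def toLp (ω : ℕ → ℝ) : hardySpace ω →ₗ[ℂ] ℓ² where
  toFun a := ⟨sqrtWeightMul ω a, a.2⟩
  map_add' a b := lp.ext (map_add (sqrtWeightMul ω) a.1 b.1)
  map_smul' c a := lp.ext (map_smul (sqrtWeightMul ω) c a.1)

lemma sqrtWeightMul_apply (a : ℕ → ℂ) (k : ℕ) : sqrtWeightMul ω a k = (√(ω k) : ℂ) * a k := rfl

lemma toLp_apply (a : hardySpace ω) (k : ℕ) : toLp ω a k = (√(ω k) : ℂ) * a.1 k := rfl

lemma norm_sqrtWeightMul_sq (hω : ∀ k, 0 ≤ ω k) (a : ℕ → ℂ) (k : ℕ) :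
    ‖sqrtWeightMul ω a k‖ ^ 2 = ‖a k‖ ^ 2 * ω k := by
  rw [sqrtWeightMul_apply, norm_mul, mul_pow, Complex.norm_real, Real.norm_eq_abs, sq_abs,
    Real.sq_sqrt (hω k), mul_comm]

lemma mem_hardySpace_iff (hω : ∀ k, 0 ≤ ω k) {a : ℕ → ℂ} :
    a ∈ hardySpace ω ↔ MemHw ω a := by
  change Memℓp _ 2 ↔ _
  rw [memℓp_gen_iff (by norm_num), MemHw]
  simp [← norm_sqrtWeightMul_sq hω]

lemma norm_toLp_sq (hω : ∀ k, 0 ≤ ω k) {a : ℕ → ℂ} (ha : a ∈ hardySpace ω) :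
    ‖toLp ω ⟨a, ha⟩‖ ^ 2 = wNormSq ω a := by
  have := lp.norm_rpow_eq_tsum (p := 2) (by norm_num) (toLp ω ⟨a, ha⟩)
  simp only [ENNReal.toReal_ofNat, Real.rpow_two] at this
  rw [this, wNormSq]
  exact tsum_congr (norm_sqrtWeightMul_sq hω a)

lemma toLp_ne_zero (hω : ∀ k, 0 < ω k) {a : hardySpace ω} (ha : a ≠ 0) : toLp ω a ≠ 0 := by
  refine fun h => ha (Subtype.ext (_root_.funext fun k => ?_))
  have := congrArg (fun x : ℓ² => x k) h
  simpa [toLp_apply, Real.sqrt_ne_zero'.2 (hω k)] using this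

lemma oneSeq_mem_hardySpace : oneSeq ∈ hardySpace ω := by
  refine memℓp_gen_iff (by norm_num) |>.2 (summable_of_ne_finset_zero (s := {0}) fun k hk => ?_)
  simp_all [sqrtWeightMul_apply, oneSeq]

lemma inner_toLp_oneSeq (hω0 : 0 ≤ ω 0) (a : hardySpace ω) :
    inner ℂ (toLp ω ⟨oneSeq, oneSeq_mem_hardySpace⟩) (toLp ω a) = ω 0 * a.1 0 := by
  have hsingle : toLp ω ⟨oneSeq, oneSeq_mem_hardySpace⟩ = lp.single 2 0 (√(ω 0) : ℂ) := by
    ext k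
    by_cases hk : k = 0 <;> simp [toLp_apply, oneSeq, hk]
  rw [hsingle, lp.inner_single_left, toLp_apply, RCLike.inner_apply, Complex.conj_ofReal,
    mul_right_comm, ← Complex.ofReal_mul, Real.mul_self_sqrt hω0]

end HardySpace

section Shift

variable {ω : ℕ → ℝ} {C : ℝ}

lemma shiftSeq_mem_hardySpace (hω : ∀ k, 0 ≤ ω k) (hC : ∀ k, ω (k + 1) ≤ C * ω k)
    {a : ℕ → ℂ} (ha : a ∈ hardySpace ω) : shiftSeq a ∈ hardySpace ω := by
  rw [mem_hardySpace_iff hω] at ha ⊢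
  rw [MemHw, ← summable_nat_add_iff 1]
  refine (ha.mul_left C).of_nonneg_of_le (fun k => by positivity [hω (k + 1)]) fun k => ?_
  calc ‖a k‖ ^ 2 * ω (k + 1) ≤ ‖a k‖ ^ 2 * (C * ω k) := by gcongr; exact hC k
    _ = C * (‖a k‖ ^ 2 * ω k) := by ring

lemma polyMulSeq_mem_hardySpace (hω : ∀ k, 0 ≤ ω k) (hC : ∀ k, ω (k + 1) ≤ C * ω k)
    {f : ℕ → ℂ} (hf : f ∈ hardySpace ω) (p : ℂ[X]) : polyMulSeq p f ∈ hardySpace ω := by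
  induction p using Polynomial.induction_on' with
  | add p q hp hq => rw [polyMulSeq_add]; exact add_mem hp hq
  | monomial m c =>
    induction m with
    | zero => rw [monomial_zero_left, polyMulSeq_C]; exact Submodule.smul_mem _ c hf
    | succ m ih =>
      rw [← X_mul_monomial, polyMulSeq_X_mul]
      exact shiftSeq_mem_hardySpace hω hC ih

lemma norm_toLp_le_norm_toLp_shiftSeq (hmono : Monotone ω) (hω : ∀ k, 0 ≤ ω k)
    {a : ℕ → ℂ} (ha : a ∈ hardySpace ω) (hsa : shiftSeq a ∈ hardySpace ω) :
    ‖toLp ω ⟨a, ha⟩‖ ≤ ‖toLp ω ⟨shiftSeq a, hsa⟩‖ := by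
  have hsum := (mem_hardySpace_iff hω).1 hsa
  rw [← pow_le_pow_iff_left₀ (norm_nonneg _) (norm_nonneg _) two_ne_zero,
    norm_toLp_sq hω, norm_toLp_sq hω, wNormSq, wNormSq, hsum.tsum_eq_zero_add, shiftSeq.eq_1,
    norm_zero, zero_pow two_ne_zero, zero_mul, zero_add]
  rw [MemHw, ← summable_nat_add_iff 1] at hsum
  exact ((mem_hardySpace_iff hω).1 ha).tsum_le_tsum
    (fun k => mul_le_mul_of_nonneg_left (hmono k.le_succ) (sq_nonneg _)) hsum

end Shift

lemma exists_forall_succ_le_mul {ω : ℕ → ℝ} (hωpos : ∀ k, 0 < ω k)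
    (hratio : Tendsto (fun k => ω k / ω (k + 1)) atTop (nhds 1)) :
    ∃ C, ∀ k, ω (k + 1) ≤ C * ω k := by
  have hinv : Tendsto (fun k => ω (k + 1) / ω k) atTop (nhds 1) := by
    simpa only [inv_div, inv_one] using hratio.inv₀ one_ne_zero
  obtain ⟨C, hC⟩ := hinv.bddAbove_range
  exact ⟨C, fun k => (div_le_iff₀ (hωpos k)).1 (hC (Set.mem_range_self k))⟩

namespace IsOPA

variable {ω : ℕ → ℝ} {f : ℕ → ℂ} {n : ℕ} {q : ℂ[X]}

theorem inner_toLp_eq_zero (hq : IsOPA ω f n q) (hω : ∀ k, 0 ≤ ω k)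
    (hqf : polyMulSeq q f ∈ hardySpace ω) {p : ℂ[X]} (hpf : polyMulSeq p f ∈ hardySpace ω)
    (hp : p.natDegree ≤ n) :
    inner ℂ (toLp ω ⟨polyMulSeq q f - oneSeq, (hardySpace ω).sub_mem hqf oneSeq_mem_hardySpace⟩)
      (toLp ω ⟨polyMulSeq p f, hpf⟩) = 0 := by
  refine inner_eq_zero_of_forall_norm_le_norm_sub_smul fun c => ?_
  have hdeg : (q - c • p).natDegree ≤ n :=
    (natDegree_sub_le _ _).trans (max_le hq.1 ((natDegree_smul_le c p).trans hp))
  have hmem : polyMulSeq (q - c • p) f - oneSeq ∈ hardySpace ω := by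
    rw [polyMulSeq_sub, polyMulSeq_smul]
    exact (hardySpace ω).sub_mem ((hardySpace ω).sub_mem hqf ((hardySpace ω).smul_mem c hpf))
      oneSeq_mem_hardySpace
  have hcomp : toLp ω ⟨polyMulSeq q f - oneSeq, (hardySpace ω).sub_mem hqf oneSeq_mem_hardySpace⟩
      - c • toLp ω ⟨polyMulSeq p f, hpf⟩ = toLp ω ⟨_, hmem⟩ := by
    ext k
    simp only [lp.coeFn_sub, lp.coeFn_smul, Pi.sub_apply, Pi.smul_apply, toLp_apply,
      polyMulSeq_sub, polyMulSeq_smul, smul_eq_mul]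
    ring
  rw [hcomp, ← pow_le_pow_iff_left₀ (norm_nonneg _) (norm_nonneg _) two_ne_zero,
    norm_toLp_sq hω, norm_toLp_sq hω]
  exact hq.2 _ hdeg

theorem ne_zero (hq : IsOPA ω f n q) (hωpos : ∀ k, 0 < ω k) (hf : f ∈ hardySpace ω)
    (hf0 : f 0 ≠ 0) : q ≠ 0 := by
  rintro rfl
  have hω : ∀ k, 0 ≤ ω k := fun k => (hωpos k).le
  have h0f : polyMulSeq 0 f ∈ hardySpace ω := by rw [polyMulSeq_zero]; exact zero_mem _
  have h1f : polyMulSeq 1 f ∈ hardySpace ω := by rwa [polyMulSeq_one]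
  have hneg : toLp ω ⟨polyMulSeq 0 f - oneSeq, (hardySpace ω).sub_mem h0f oneSeq_mem_hardySpace⟩
      = -toLp ω ⟨oneSeq, oneSeq_mem_hardySpace⟩ := by
    ext k
    simp [toLp_apply, polyMulSeq_zero]
  have horth := hq.inner_toLp_eq_zero hω h0f h1f (by simp)
  rw [hneg, inner_neg_left, inner_toLp_oneSeq (hω 0), neg_eq_zero] at horth
  have hf1 : polyMulSeq 1 f 0 ≠ 0 := by rwa [polyMulSeq_one]
  exact mul_ne_zero (Complex.ofReal_ne_zero.2 (hωpos 0).ne') hf1 horth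

theorem inner_shiftSeq_sub_smul_eq_zero {z : ℂ} {r : ℂ[X]} (hq : IsOPA ω f n ((X - C z) * r))
    (hω : ∀ k, 0 ≤ ω k) (hmem : ∀ p : ℂ[X], polyMulSeq p f ∈ hardySpace ω)
    (hSg : shiftSeq (polyMulSeq r f) ∈ hardySpace ω) :
    inner ℂ (toLp ω ⟨shiftSeq (polyMulSeq r f), hSg⟩ - z • toLp ω ⟨polyMulSeq r f, hmem r⟩)
      (toLp ω ⟨shiftSeq (polyMulSeq r f), hSg⟩) = 0 := by
  have hdeg : (X * r).natDegree ≤ n := by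
    rcases eq_or_ne r 0 with rfl | hr
    · simp
    simpa [natDegree_mul (X_sub_C_ne_zero z) hr, natDegree_mul X_ne_zero hr] using hq.1
  have horth := hq.inner_toLp_eq_zero hω (hmem _) (hmem (X * r)) hdeg
  have hX : toLp ω ⟨polyMulSeq (X * r) f, hmem (X * r)⟩
      = toLp ω ⟨shiftSeq (polyMulSeq r f), hSg⟩ := by
    simp_rw [polyMulSeq_X_mul]
  have hdecomp : toLp ω ⟨polyMulSeq ((X - C z) * r) f - oneSeq,
        (hardySpace ω).sub_mem (hmem _) oneSeq_mem_hardySpace⟩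
      = toLp ω ⟨shiftSeq (polyMulSeq r f), hSg⟩ - z • toLp ω ⟨polyMulSeq r f, hmem r⟩
        - toLp ω ⟨oneSeq, oneSeq_mem_hardySpace⟩ := by
    ext k
    simp only [lp.coeFn_sub, lp.coeFn_smul, Pi.sub_apply, Pi.smul_apply, toLp_apply,
      sub_mul, polyMulSeq_sub, polyMulSeq_X_mul, ← smul_eq_C_mul, polyMulSeq_smul, smul_eq_mul]
    ring
  have hSg0 : shiftSeq (polyMulSeq r f) 0 = 0 := rfl
  rwa [hX, hdecomp, inner_sub_left, inner_toLp_oneSeq (hω 0), Submodule.coe_mk, hSg0, mul_zero,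
    sub_zero] at horth

end IsOPA

theorem stmt_10_general (ω : ℕ → ℝ) (hωpos : ∀ k, 0 < ω k)
    (hmono : Monotone ω)
    (hratio : Tendsto (fun k => ω k / ω (k + 1)) atTop (nhds 1))
    (f : ℕ → ℂ) (hf : MemHw ω f) (hf0 : f ≠ 0) (hf00 : f 0 ≠ 0)
    (n : ℕ) (q : Polynomial ℂ) (hq : IsOPA ω f n q)
    (z₁ : ℂ) (hz : q.eval z₁ = 0) :
    1 ≤ ‖z₁‖ := by
  have hω : ∀ k, 0 ≤ ω k := fun k => (hωpos k).le
  obtain ⟨C, hC⟩ := exists_forall_succ_le_mul hωpos hratio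
  have hfH : f ∈ hardySpace ω := (mem_hardySpace_iff hω).2 hf
  have hmem := polyMulSeq_mem_hardySpace hω hC hfH
  obtain ⟨r, rfl⟩ := dvd_iff_isRoot.2 hz
  have hr : r ≠ 0 := right_ne_zero_of_mul (hq.ne_zero hωpos hfH hf00)
  have hSg : shiftSeq (polyMulSeq r f) ∈ hardySpace ω := shiftSeq_mem_hardySpace hω hC (hmem r)
  have hg : toLp ω ⟨polyMulSeq r f, hmem r⟩ ≠ 0 :=
    toLp_ne_zero hωpos fun h => polyMulSeq_ne_zero hr hf0 (congrArg Subtype.val h)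
  exact one_le_norm_of_inner_sub_smul_eq_zero hg
    (norm_toLp_le_norm_toLp_shiftSeq hmono hω (hmem r) hSg)
    (hq.inner_shiftSeq_sub_smul_eq_zero hω hmem hSg)

/-- With non-decreasing weights, every zero of every opa has modulus at least 1. -/
theorem stmt_10 (ω : ℕ → ℝ) (hω0 : ω 0 = 1) (hωpos : ∀ k, 0 < ω k)
    (hmono : Monotone ω)
    (hratio : Tendsto (fun k => ω k / ω (k + 1)) atTop (nhds 1))
    (f : ℕ → ℂ) (hf : MemHw ω f) (hf0 : f ≠ 0) (hf00 : f 0 ≠ 0)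
    (n : ℕ) (q : Polynomial ℂ) (hq : IsOPA ω f n q)
    (z₁ : ℂ) (hz : q.eval z₁ = 0) :
    1 ≤ ‖z₁‖ :=
  stmt_10_general ω hωpos hmono hratio f hf hf0 hf00 n q hq z₁ hz
end
end
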